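/- arXiv:1308.6689 — 2 statements merged into one kernel-verified Lean document; each statement's English description precedes it below -/
import Mathlib

section
/- For any connected graph G of order n ≥ 2 and any positive integers r and s, dim_l(G ⊙ K_{r,s}) = n. -/
open SimpleGraph

/-- A set `S` is a local metric generator for `G` if every pair of adjacent
vertices is distinguished (by distance) by some element of `S`. -/
def IsLocalMetricGenerator {α : Type*} (G : SimpleGraph α) (S : Set α) : Prop :=
  ∀ x y : α, G.Adj x y → ∃ v ∈ S, G.dist v x ≠ G.dist v y

/-- The local metric dimension of a graph. -/
noncomputable def localMetricDim {α : Type*} (G : SimpleGraph α) : ℕ :=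
  sInf {k | ∃ S : Finset α, S.card = k ∧ IsLocalMetricGenerator G ↑S}

/-- A local metric basis: a minimum-cardinality local metric generator. -/
def IsLocalMetricBasis {α : Type*} (G : SimpleGraph α) (S : Finset α) : Prop :=
  IsLocalMetricGenerator G ↑S ∧ S.card = localMetricDim G

/-- The corona product `G ⊙ H`. -/
def corona {α β : Type*} (G : SimpleGraph α) (H : SimpleGraph β) :
    SimpleGraph (α ⊕ α × β) :=
  SimpleGraph.fromRel (fun x y => match x, y with
    | Sum.inl a, Sum.inl a' => G.Adj a a'
    | Sum.inl a, Sum.inr p => a = p.1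
    | Sum.inr p, Sum.inl a => a = p.1
    | Sum.inr p, Sum.inr q => p.1 = q.1 ∧ H.Adj p.2 q.2)

/-- The join `K₁ + H`; the vertex of `K₁` is `none`. -/
def joinK1 {β : Type*} (H : SimpleGraph β) : SimpleGraph (Option β) :=
  SimpleGraph.fromRel (fun x y => match x, y with
    | none, some _ => True
    | some b, some b' => H.Adj b b'
    | _, _ => False)

/-- Eccentricity of a vertex (in `ℕ∞`). -/
noncomputable def ecc {α : Type*} (G : SimpleGraph α) (x : α) : ℕ∞ :=
  ⨆ y, G.edist x y

/-- Radius of a graph (in `ℕ∞`). -/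
noncomputable def gradius {α : Type*} (G : SimpleGraph α) : ℕ∞ :=
  ⨅ x, ecc G x

/-- Diameter of a graph (in `ℕ∞`). -/
noncomputable def gdiam {α : Type*} (G : SimpleGraph α) : ℕ∞ :=
  ⨆ x, ecc G x

/-! The centre `a` separates its copy of `K_{r,s}` from the rest of `G ⊙ K_{r,s}`, so a vertex
`v` outside the copy is at distance `d(v, a) + 1` from each of its vertices. As the copy contains
an edge, every local metric generator meets every copy, whence `dim_l ≥ n`. Conversely, one vertex
from the first side of each copy suffices: it is adjacent to its centre and to the second side of
its copy but not to the rest of the first side, and a centre is told apart from a second-side vertex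
of its copy by the vertex chosen in another copy, which exists since `n ≥ 2`. -/

namespace SimpleGraph

variable {V : Type*} {G : SimpleGraph V} {x y z : V}

theorem Reachable.dist_eq_add_of_forall_mem_support (hxy : G.Reachable x y)
    (h : ∀ w : G.Walk x y, z ∈ w.support) : G.dist x y = G.dist x z + G.dist z y := by
  classical
  obtain ⟨w, hw⟩ := hxy.exists_walk_length_eq_dist
  have hz := h w
  refine le_antisymm (Reachable.dist_triangle_left ⟨w.takeUntil z hz⟩ y) ?_
  rw [← hw, ← w.take_spec hz, Walk.length_append]
  exact add_le_add (dist_le _) (dist_le _)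

theorem dist_ne_of_adj_of_not_adj (hx : G.Adj z x) (hy : ¬G.Adj z y) :
    G.dist z x ≠ G.dist z y := by
  rw [dist_eq_one_iff_adj.mpr hx]
  exact fun h => hy (dist_eq_one_iff_adj.mp h.symm)

end SimpleGraph

lemma localMetricDim_eq_card_of_isLocalMetricGenerator {V : Type*}
    {G : SimpleGraph V} {S : Finset V} (hS : IsLocalMetricGenerator G S)
    (hmin : ∀ T : Finset V, IsLocalMetricGenerator G T → S.card ≤ T.card) :
    localMetricDim G = S.card := by
  refine le_antisymm (Nat.sInf_le ⟨S, rfl, hS⟩) (le_csInf ⟨_, S, rfl, hS⟩ ?_)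
  rintro _ ⟨T, rfl, hT⟩
  exact hmin T hT

section Corona

variable {α β : Type*} {G : SimpleGraph α} {H : SimpleGraph β}

@[simp]
lemma corona_adj_inl_inl {a b : α} :
    (corona G H).Adj (Sum.inl a) (Sum.inl b) ↔ G.Adj a b := by
  simp only [corona, fromRel_adj, ne_eq, Sum.inl.injEq]
  exact ⟨fun ⟨_, h⟩ => h.elim id (·.symm), fun h => ⟨h.ne, Or.inl h⟩⟩

@[simp]
lemma corona_adj_inl_inr {a b : α} {q : β} :
    (corona G H).Adj (Sum.inl a) (Sum.inr (b, q)) ↔ a = b := by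
  simp [corona]

@[simp]
lemma corona_adj_inr_inl {a b : α} {q : β} :
    (corona G H).Adj (Sum.inr (b, q)) (Sum.inl a) ↔ a = b := by
  rw [adj_comm, corona_adj_inl_inr]

@[simp]
lemma corona_adj_inr_inr {a b : α} {p q : β} :
    (corona G H).Adj (Sum.inr (a, p)) (Sum.inr (b, q)) ↔ a = b ∧ H.Adj p q := by
  simp only [corona, fromRel_adj, ne_eq, Sum.inr.injEq, Prod.mk.injEq]
  constructor
  · rintro ⟨_, ⟨rfl, h⟩ | ⟨rfl, h⟩⟩
    exacts [⟨rfl, h⟩, ⟨rfl, h.symm⟩]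
  · rintro ⟨rfl, h⟩
    exact ⟨fun ⟨_, hpq⟩ => h.ne hpq, Or.inl ⟨rfl, h⟩⟩

lemma corona_connected (hG : G.Connected) : (corona G H).Connected := by
  have : Nonempty α := hG.nonempty
  have reach_inl : ∀ z : α ⊕ α × β, ∃ a, (corona G H).Reachable z (Sum.inl a) := by
    rintro (a | ⟨a, q⟩)
    · exact ⟨a, .rfl⟩
    · exact ⟨a, (corona_adj_inr_inl.mpr rfl).reachable⟩
  let ι : G →g corona G H := ⟨Sum.inl, corona_adj_inl_inl.mpr⟩
  refine ⟨fun x y => ?_⟩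
  obtain ⟨a, hx⟩ := reach_inl x
  obtain ⟨b, hy⟩ := reach_inl y
  exact hx.trans (((hG a b).map ι).trans hy.symm)

lemma corona_inl_mem_support {a : α} {x : α ⊕ α × β} {q : β} (hx : ∀ p, x ≠ Sum.inr (a, p))
    (w : (corona G H).Walk x (Sum.inr (a, q))) : Sum.inl a ∈ w.support := by
  obtain ⟨d, hd, hfst, hsnd⟩ := w.exists_boundary_dart {v | ∀ p, v ≠ Sum.inr (a, p)} hx
    (fun h => h q rfl)
  obtain ⟨p, hp⟩ : ∃ p, d.snd = Sum.inr (a, p) := by simpa using hsnd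
  have hadj := d.adj
  rw [hp] at hadj
  rcases hd' : d.fst with b | ⟨b, p'⟩
  · rw [hd', corona_adj_inl_inr] at hadj
    simpa [hd', hadj] using w.dart_fst_mem_support_of_mem_darts hd
  · rw [hd', corona_adj_inr_inr] at hadj
    exact absurd (hd'.trans (by rw [hadj.1])) (hfst p')

lemma corona_dist_inr (hG : G.Connected) {a : α} {x : α ⊕ α × β} (hx : ∀ p, x ≠ Sum.inr (a, p))
    (q : β) : (corona G H).dist x (Sum.inr (a, q)) = (corona G H).dist x (Sum.inl a) + 1 := by
  rw [((corona_connected hG).preconnected _ _).dist_eq_add_of_forall_mem_support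
    (corona_inl_mem_support hx), dist_eq_one_iff_adj.mpr (corona_adj_inl_inr.mpr rfl)]

lemma IsLocalMetricGenerator.exists_inr_mem_of_corona (hG : G.Connected) {S : Set (α ⊕ α × β)}
    (hS : IsLocalMetricGenerator (corona G H) S) {p q : β} (hpq : H.Adj p q) (a : α) :
    ∃ p', Sum.inr (a, p') ∈ S := by
  obtain ⟨v, hv, hne⟩ := hS _ _ (corona_adj_inr_inr.mpr ⟨rfl, hpq⟩ : (corona G H).Adj
    (Sum.inr (a, p)) (Sum.inr (a, q)))
  by_contra! hout
  have hx : ∀ p', v ≠ Sum.inr (a, p') := fun p' h => hout p' (h ▸ hv)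
  exact hne (by rw [corona_dist_inr hG hx, corona_dist_inr hG hx])

lemma IsLocalMetricGenerator.card_le_of_corona [Fintype α] (hG : G.Connected)
    {S : Finset (α ⊕ α × β)} (hS : IsLocalMetricGenerator (corona G H) S) {p q : β}
    (hpq : H.Adj p q) : Fintype.card α ≤ S.card := by
  refine Finset.card_le_card_of_surjOn (Sum.elim id Prod.fst) fun a _ => ?_
  obtain ⟨p', hp'⟩ := hS.exists_inr_mem_of_corona hG hpq a
  exact ⟨_, hp', rfl⟩

lemma isLocalMetricGenerator_corona_completeBipartiteGraph [Nontrivial α] {γ : Type*}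
    (hG : G.Connected) (i₀ : β) :
    IsLocalMetricGenerator (corona G (completeBipartiteGraph β γ))
      (Set.range fun a => Sum.inr (a, Sum.inl i₀)) := by
  have inl_inr : ∀ a (q : β ⊕ γ), ∃ v ∈ Set.range fun a => Sum.inr (a, Sum.inl i₀),
      (corona G (completeBipartiteGraph β γ)).dist v (Sum.inl a) ≠
        (corona G (completeBipartiteGraph β γ)).dist v (Sum.inr (a, q)) := by
    rintro a (i | j)
    · exact ⟨_, ⟨a, rfl⟩, dist_ne_of_adj_of_not_adj (by simp) (by simp)⟩
    · obtain ⟨a', ha'⟩ := exists_ne a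
      refine ⟨_, ⟨a', rfl⟩, ?_⟩
      rw [corona_dist_inr hG (by simpa using ha')]
      omega
  rintro (a | ⟨a, p⟩) (b | ⟨b, q⟩) hadj
  · exact ⟨_, ⟨a, rfl⟩, dist_ne_of_adj_of_not_adj (by simp)
      (by simpa using (corona_adj_inl_inl.mp hadj).ne')⟩
  · obtain rfl := corona_adj_inl_inr.mp hadj
    exact inl_inr a q
  · obtain rfl := corona_adj_inr_inl.mp hadj
    obtain ⟨v, hv, hne⟩ := inl_inr b p
    exact ⟨v, hv, hne.symm⟩
  · obtain ⟨rfl, hpq⟩ := corona_adj_inr_inr.mp hadj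
    rcases p with i | j <;> rcases q with i' | j' <;> simp at hpq
    · exact ⟨_, ⟨a, rfl⟩, (dist_ne_of_adj_of_not_adj (by simp) (by simp)).symm⟩
    · exact ⟨_, ⟨a, rfl⟩, dist_ne_of_adj_of_not_adj (by simp) (by simp)⟩

end Corona

/-- For connected `G` of order `n ≥ 2` and positive `r`, `s`,
`dim_l (G ⊙ K_{r,s}) = n`. -/
theorem stmt7 {α : Type*} [Fintype α] (G : SimpleGraph α) (hG : G.Connected)
    (hn : 2 ≤ Fintype.card α) (r s : ℕ) (hr : 1 ≤ r) (hs : 1 ≤ s) :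
    localMetricDim (corona G (completeBipartiteGraph (Fin r) (Fin s))) = Fintype.card α := by
  have : Nontrivial α := Fintype.one_lt_card_iff_nontrivial.mp hn
  let S := Finset.univ.map
    ⟨fun a : α => (Sum.inr (a, Sum.inl ⟨0, hr⟩) : α ⊕ α × (Fin r ⊕ Fin s)), by intro; simp⟩
  have hS : IsLocalMetricGenerator (corona G (completeBipartiteGraph (Fin r) (Fin s))) ↑S := by
    rw [Finset.coe_map, Finset.coe_univ, Set.image_univ]
    exact isLocalMetricGenerator_corona_completeBipartiteGraph (γ := Fin s) hG (⟨0, hr⟩ : Fin r)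
  have hedge : (completeBipartiteGraph (Fin r) (Fin s)).Adj (Sum.inl ⟨0, hr⟩) (Sum.inr ⟨0, hs⟩) := by
    simp
  rw [localMetricDim_eq_card_of_isLocalMetricGenerator hS
    fun T hT => (Finset.card_map _).trans_le (hT.card_le_of_corona hG hedge)]
  simp [S]
end

section
/- For any graph H of diameter two and any connected graph G of order n ≥ 2, dim_l(G ⊙ H) = n · dim_l(H). -/
open SimpleGraph

/-!
In `G ⊙ H` the vertex `inl a` separates the `a`-th copy of `H` from the rest of the graph, so
every vertex outside that copy is equidistant from all of its vertices, while inside the copy the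
distances are those of `K₁ + H`, namely `min d_H 2`, which is `d_H` when `H` has diameter two.
Hence a local metric generator of `G ⊙ H` restricts on every copy to one of `H`, which gives
`n · dim_l H ≤ dim_l (G ⊙ H)`. Conversely, a local metric basis of `H` placed in every copy
resolves every edge of `G ⊙ H`: an edge `inl a – inl a'` is resolved from the copy at `a`, and an
edge `inl a – (a, b)` from any other copy, which sees `(a, b)` one step further than `inl a`.
-/

section LocalMetricDim

variable {α : Type*} {G : SimpleGraph α}

lemma localMetricDim_le_card {S : Finset α} (hS : IsLocalMetricGenerator G S) :
    localMetricDim G ≤ S.card :=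
  Nat.sInf_le ⟨S, rfl, hS⟩

lemma isLocalMetricGenerator_univ [Fintype α] :
    IsLocalMetricGenerator G (Finset.univ : Finset α) :=
  fun x y h ↦ ⟨x, by simp, by simp [dist_eq_one_iff_adj.mpr h]⟩

lemma exists_isLocalMetricBasis [Fintype α] : ∃ S, IsLocalMetricBasis G S := by
  obtain ⟨S, hcard, hS⟩ : localMetricDim G ∈ {k | ∃ S : Finset α, S.card = k ∧
      IsLocalMetricGenerator G S} :=
    Nat.sInf_mem ⟨_, Finset.univ, rfl, isLocalMetricGenerator_univ⟩
  exact ⟨S, hS, hcard⟩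

lemma IsLocalMetricGenerator.nonempty {S : Set α} (hS : IsLocalMetricGenerator G S)
    (hG : G ≠ ⊥) : S.Nonempty := by
  obtain ⟨x, y, hxy⟩ := ne_bot_iff_exists_adj.mp hG
  obtain ⟨v, hv, -⟩ := hS x y hxy
  exact ⟨v, hv⟩

end LocalMetricDim

open Finset in
lemma sum_card_filter_inr_mem_le {α β γ : Type*} [Fintype α] [Fintype β]
    [DecidableEq (γ ⊕ α × β)] (S : Finset (γ ⊕ α × β)) :
    ∑ a, #{b | Sum.inr (a, b) ∈ S} ≤ #S :=
  calc ∑ a, #{b | Sum.inr (a, b) ∈ S} = #{p : α × β | Sum.inr p ∈ S} := by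
        simp only [card_filter, Fintype.sum_prod_type]
    _ ≤ #S := card_le_card_of_injOn Sum.inr (fun p hp ↦ (mem_filter.mp hp).2)
        Sum.inr_injective.injOn

namespace Corona

variable {α β : Type*} {G : SimpleGraph α} {H : SimpleGraph β}

@[simp]
lemma adj_inl_inl {a a' : α} : (corona G H).Adj (.inl a) (.inl a') ↔ G.Adj a a' := by
  simp +contextual [corona, fromRel_adj, adj_comm, G.ne_of_adj]

@[simp]
lemma adj_inl_inr {a : α} {p : α × β} : (corona G H).Adj (.inl a) (.inr p) ↔ a = p.1 := by
  simp [corona, fromRel_adj]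

@[simp]
lemma adj_inr_inl {a : α} {p : α × β} : (corona G H).Adj (.inr p) (.inl a) ↔ a = p.1 := by
  rw [adj_comm, adj_inl_inr]

@[simp]
lemma adj_inr_inr {p q : α × β} :
    (corona G H).Adj (.inr p) (.inr q) ↔ p.1 = q.1 ∧ H.Adj p.2 q.2 := by
  simp only [corona, fromRel_adj, ne_eq, Sum.inr.injEq]
  grind [H.ne_of_adj, H.adj_symm, Prod.ext_iff]

def copyHom (G : SimpleGraph α) (H : SimpleGraph β) (a : α) : H →g corona G H where
  toFun b := .inr (a, b)
  map_rel' h := adj_inr_inr.mpr ⟨rfl, h⟩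

lemma reachable_inr_inl (a : α) (b : β) : (corona G H).Reachable (.inr (a, b)) (.inl a) :=
  (adj_inr_inl.mpr rfl).reachable

lemma connected (hG : G.Connected) : (corona G H).Connected := by
  have hinl (a a' : α) : (corona G H).Reachable (.inl a) (.inl a') :=
    (hG.preconnected a a').elim fun p ↦ ⟨p.map ⟨Sum.inl, adj_inl_inl.mpr⟩⟩
  have hC : (corona G H).Preconnected := by
    rintro (a | ⟨a, b⟩) (a' | ⟨a', b'⟩)
    · exact hinl a a'
    · exact (hinl a a').trans (reachable_inr_inl a' b').symm
    · exact (reachable_inr_inl a b).trans (hinl a a')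
    · exact (reachable_inr_inl a b).trans ((hinl a a').trans (reachable_inr_inl a' b').symm)
  obtain ⟨a⟩ := hG.nonempty
  exact { preconnected := hC, nonempty := ⟨.inl a⟩ }

lemma dist_inl_add_one_le_length {a : α} {b : β} {v w : α ⊕ α × β}
    (p : (corona G H).Walk v w) (hv : ∀ b', v ≠ .inr (a, b')) (hw : w = .inr (a, b)) :
    (corona G H).dist v (.inl a) + 1 ≤ p.length := by
  induction p with
  | nil => exact absurd hw (hv b)
  | @cons v u w hvu p ih =>
    rw [Walk.length_cons]
    by_cases hu : ∃ b', u = .inr (a, b')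
    · obtain ⟨b', rfl⟩ := hu
      obtain rfl : v = .inl a := by
        rcases v with a' | ⟨a', b''⟩ <;> simp_all
      simp
    · push Not at hu
      have htri := hvu.reachable.dist_triangle_left (.inl a)
      rw [dist_eq_one_iff_adj.mpr hvu] at htri
      have hind := ih hu hw
      omega

lemma dist_inr_of_reachable {a : α} {v : α ⊕ α × β} (hv : ∀ b', v ≠ .inr (a, b'))
    (hr : (corona G H).Reachable v (.inl a)) (b : β) :
    (corona G H).dist v (.inr (a, b)) = (corona G H).dist v (.inl a) + 1 := by
  refine le_antisymm ?_ ?_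
  · have := (reachable_inr_inl (G := G) (H := H) a b).symm.dist_triangle_right v
    rwa [dist_eq_one_iff_adj.mpr ((adj_inl_inr (p := (a, b))).mpr rfl)] at this
  · obtain ⟨p, hp⟩ := (hr.trans (reachable_inr_inl a b).symm).exists_walk_length_eq_dist
    exact hp ▸ dist_inl_add_one_le_length p hv rfl

lemma dist_inr_eq_dist_inr {a : α} {v : α ⊕ α × β} (hv : ∀ b', v ≠ .inr (a, b'))
    (b b' : β) :
    (corona G H).dist v (.inr (a, b)) = (corona G H).dist v (.inr (a, b')) := by
  by_cases hr : (corona G H).Reachable v (.inl a)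
  · rw [dist_inr_of_reachable hv hr, dist_inr_of_reachable hv hr]
  · have (b : β) : ¬(corona G H).Reachable v (.inr (a, b)) :=
      fun h ↦ hr (h.trans (reachable_inr_inl a b))
    rw [dist_eq_zero_of_not_reachable (this b), dist_eq_zero_of_not_reachable (this b')]

lemma dist_inr_inr {a : α} {b b' : β} (h : H.Reachable b b') :
    (corona G H).dist (.inr (a, b)) (.inr (a, b')) = min (H.dist b b') 2 := by
  have hr : (corona G H).Reachable (.inr (a, b)) (.inr (a, b')) :=
    (reachable_inr_inl a b).trans (reachable_inr_inl a b').symm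
  refine le_antisymm (le_min ?_ ?_) ?_
  · obtain ⟨p, hp⟩ := h.exists_walk_length_eq_dist
    have := dist_le (p.map (copyHom G H a))
    rwa [Walk.length_map, hp] at this
  · exact dist_le (G := corona G H) (.cons ((adj_inr_inl (p := (a, b))).mpr rfl)
      (.cons ((adj_inl_inr (p := (a, b'))).mpr rfl) .nil))
  · obtain h0 | h1 | h2 : (corona G H).dist (.inr (a, b)) (.inr (a, b')) = 0 ∨
        (corona G H).dist (.inr (a, b)) (.inr (a, b')) = 1 ∨
        2 ≤ (corona G H).dist (.inr (a, b)) (.inr (a, b')) := by omega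
    · simp_all [hr.dist_eq_zero_iff]
    · rw [h1, dist_eq_one_iff_adj.mpr (adj_inr_inr.mp (dist_eq_one_iff_adj.mp h1)).2]
      simp
    · exact min_le_of_right_le h2

lemma dist_inr_inr_of_ediam_le_two (hH : H.ediam ≤ 2) (a : α) (b b' : β) :
    (corona G H).dist (.inr (a, b)) (.inr (a, b')) = H.dist b b' := by
  have hedist : H.edist b b' ≤ 2 := edist_le_ediam.trans hH
  have hr : H.Reachable b b' := reachable_of_edist_ne_top (ne_top_of_le_ne_top (by simp) hedist)
  rw [dist_inr_inr hr, min_eq_left]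
  exact_mod_cast hr.coe_dist_eq_edist ▸ hedist

lemma isLocalMetricGenerator_image_inr [Nontrivial α] (hG : G.Connected) (hH : H.ediam ≤ 2)
    {B : Set β} (hB : IsLocalMetricGenerator H B) (hne : B.Nonempty) :
    IsLocalMetricGenerator (corona G H) (Sum.inr '' (Set.univ ×ˢ B)) := by
  obtain ⟨c, hc⟩ := hne
  have hmem (a : α) {c : β} (hc : c ∈ B) :
      (.inr (a, c) : α ⊕ α × β) ∈ Sum.inr '' (Set.univ ×ˢ B) :=
    ⟨(a, c), ⟨trivial, hc⟩, rfl⟩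
  have hC := connected (H := H) hG
  have hpendant (a : α) (b : β) : ∃ v ∈ Sum.inr '' (Set.univ ×ˢ B),
      (corona G H).dist v (.inl a) ≠ (corona G H).dist v (.inr (a, b)) := by
    obtain ⟨a', ha'⟩ := exists_ne a
    refine ⟨_, hmem a' hc, ?_⟩
    rw [dist_inr_of_reachable (by simp [ha']) (hC _ _)]
    omega
  rintro (a | ⟨a, b⟩) (a' | ⟨a', b'⟩) hadj
  · refine ⟨_, hmem a hc, ?_⟩
    rw [dist_eq_one_iff_adj.mpr (adj_inr_inl.mpr rfl), dist_comm,
      dist_inr_of_reachable (by simp) (hC _ _), dist_eq_one_iff_adj.mpr hadj.symm]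
    omega
  · obtain rfl : a = a' := adj_inl_inr.mp hadj
    exact hpendant a b'
  · obtain rfl : a' = a := adj_inr_inl.mp hadj
    obtain ⟨v, hv, hne⟩ := hpendant a' b
    exact ⟨v, hv, hne.symm⟩
  · obtain ⟨rfl, hbb'⟩ := adj_inr_inr.mp hadj
    obtain ⟨c', hc', hne⟩ := hB b b' hbb'
    refine ⟨_, hmem a hc', ?_⟩
    rwa [dist_inr_inr_of_ediam_le_two hH, dist_inr_inr_of_ediam_le_two hH]

lemma isLocalMetricGenerator_fiber (hH : H.Connected) {S : Set (α ⊕ α × β)}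
    (hS : IsLocalMetricGenerator (corona G H) S) (a : α) :
    IsLocalMetricGenerator H {b | .inr (a, b) ∈ S} := by
  intro b b' hbb'
  obtain ⟨v, hv, hne⟩ := hS _ _ (adj_inr_inr.mpr ⟨rfl, hbb'⟩ :
    (corona G H).Adj (.inr (a, b)) (.inr (a, b')))
  by_cases hcopy : ∃ c, v = .inr (a, c)
  · obtain ⟨c, rfl⟩ := hcopy
    refine ⟨c, hv, fun h ↦ hne ?_⟩
    rw [dist_inr_inr (hH.preconnected c b), dist_inr_inr (hH.preconnected c b'), h]
  · push Not at hcopy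
    exact absurd (dist_inr_eq_dist_inr hcopy b b') hne

section Finite

variable [Fintype α] [Fintype β]

theorem localMetricDim_le [Nontrivial α] (hG : G.Connected) (hH : H.ediam ≤ 2)
    (hH₀ : H ≠ ⊥) :
    localMetricDim (corona G H) ≤ Fintype.card α * localMetricDim H := by
  obtain ⟨B, hB, hcard⟩ := exists_isLocalMetricBasis (G := H)
  have hS := isLocalMetricGenerator_image_inr (G := G) hG hH hB (hB.nonempty hH₀)
  calc localMetricDim (corona G H) ≤ ((Finset.univ ×ˢ B).map .inr).card :=
        localMetricDim_le_card (by simpa using hS)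
    _ = Fintype.card α * localMetricDim H := by simp [hcard]

theorem card_mul_localMetricDim_le (hH : H.Connected) :
    Fintype.card α * localMetricDim H ≤ localMetricDim (corona G H) := by
  classical
  obtain ⟨S, hS, hcard⟩ := exists_isLocalMetricBasis (G := corona G H)
  calc Fintype.card α * localMetricDim H = ∑ _a : α, localMetricDim H := by simp
    _ ≤ ∑ a, (Finset.univ.filter fun b ↦ .inr (a, b) ∈ S).card :=
        Finset.sum_le_sum fun a _ ↦
          localMetricDim_le_card (by simpa using isLocalMetricGenerator_fiber hH hS a)
    _ ≤ S.card := sum_card_filter_inr_mem_le S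
    _ = localMetricDim (corona G H) := hcard

end Finite

end Corona

/-- For `H` of diameter two and connected `G` of order `n ≥ 2`,
`dim_l (G ⊙ H) = n ⬝ dim_l H`. -/
theorem stmt13 {α β : Type*} [Fintype α] [Fintype β] (G : SimpleGraph α) (H : SimpleGraph β)
    (hG : G.Connected) (hd : gdiam H = 2) (hn : 2 ≤ Fintype.card α) :
    localMetricDim (corona G H) = Fintype.card α * localMetricDim H := by
  have hdiam : H.ediam = 2 := by rw [ediam_eq_iSup_iSup_edist]; exact hd
  have : Nontrivial α := Fintype.one_lt_card_iff_nontrivial.mp hn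
  have : Nontrivial β := nontrivial_of_ediam_ne_zero (by rw [hdiam]; simp)
  have hH : H.Connected := connected_of_ediam_ne_top (by rw [hdiam]; simp)
  have hH₀ : H ≠ ⊥ := by rintro rfl; simp [ediam_bot] at hdiam
  exact le_antisymm (Corona.localMetricDim_le hG hdiam.le hH₀)
    (Corona.card_mul_localMetricDim_le hH)
end
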